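/- In the exterior algebra Λ on θ_1,...,θ_m,ϑ_1,...,ϑ_m with Δ̌ = Σ_{r=1}^m ∂_{θ_r}∂_{ϑ_r}, the kernel of Δ̌ restricted to the bidegree-(ℓ₁,ℓ₂) component is zero whenever ℓ₁ + ℓ₂ ≥ m + 1: that is, if f ∈ Λ satisfies Δ̌(f) = 0, Σ_r θ_r∂_{θ_r}(f) = ℓ₁ f, Σ_r ϑ_r∂_{ϑ_r}(f) = ℓ₂ f, and ℓ₁ + ℓ₂ ≥ m + 1, then f = 0. -/

import Mathlib

/-!
With `η = ∑ r, θ_r ϑ_r`, the operators `Δ̌`, multiplication by `η` and the total degree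
`N = degθ + degϑ` satisfy the `sl₂`-type relations `[Δ̌, η] = N - m` and `[N, η] = 2 η`, both
consequences of the canonical anticommutation relations between the `∂`'s and the generators.
If `f` is harmonic of total degree `ℓ`, they give `Δ̌ (η^(k+1) f) = (k+1)(ℓ+k-m) η^k f`, a nonzero
multiple of `η^k f` as soon as `ℓ > m`. Since `η` is nilpotent, `η^k f = 0` for large `k`, and
descending in `k` forces `f = 0`.
-/

noncomputable section

/-- Exterior algebra on θ_1,...,θ_m,ϑ_1,...,ϑ_m -/
abbrev ExtA (m : ℕ) := ExteriorAlgebra ℂ ((Fin m ⊕ Fin m) → ℂ)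

variable (m : ℕ)

def θv (r : Fin m) : ExtA m := ExteriorAlgebra.ι ℂ (Pi.single (Sum.inl r) 1)
def ϑv (r : Fin m) : ExtA m := ExteriorAlgebra.ι ℂ (Pi.single (Sum.inr r) 1)

/-- the odd superderivation ∂_{θ_r} (left contraction with the dual vector) -/
def dθ (r : Fin m) : Module.End ℂ (ExtA m) :=
  CliffordAlgebra.contractLeft (Q := (0 : QuadraticForm ℂ ((Fin m ⊕ Fin m) → ℂ)))
    (LinearMap.proj (Sum.inl r))
/-- the odd superderivation ∂_{ϑ_r} -/
def dϑ (r : Fin m) : Module.End ℂ (ExtA m) :=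
  CliffordAlgebra.contractLeft (Q := (0 : QuadraticForm ℂ ((Fin m ⊕ Fin m) → ℂ)))
    (LinearMap.proj (Sum.inr r))

/-- Δ̌ = Σ_r ∂_{θ_r}∂_{ϑ_r} -/
def Δc : Module.End ℂ (ExtA m) := ∑ r : Fin m, dθ m r ∘ₗ dϑ m r
/-- η̌ = multiplication by Σ_r θ_r ϑ_r -/
def ηc : Module.End ℂ (ExtA m) := LinearMap.mulLeft ℂ (∑ r : Fin m, θv m r * ϑv m r)

def degθ : Module.End ℂ (ExtA m) := ∑ p : Fin m, LinearMap.mulLeft ℂ (θv m p) ∘ₗ dθ m p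
def degϑ : Module.End ℂ (ExtA m) := ∑ p : Fin m, LinearMap.mulLeft ℂ (ϑv m p) ∘ₗ dϑ m p

-- The ring commutator, written out: `add_lie`, `sum_lie`, ... do not rewrite `⁅·, ·⁆` on
-- `Module.End ℂ (ExtA m)`.
local notation "⁅" a ", " b "⁆ₘ" => a * b - b * a

theorem commutator_mul_mul {A : Type*} [Ring A] (a b t u : A) :
    ⁅a * b, t * u⁆ₘ = a * (b * t + t * b) * u - (a * t + t * a) * b * u
      + t * a * (b * u + u * b) - t * (a * u + u * a) * b := by
  noncomm_ring

theorem Finset.sum_commutator_sum {A ι κ : Type*} [Ring A] (s : Finset ι) (t : Finset κ)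
    (f : ι → A) (g : κ → A) :
    ⁅∑ i ∈ s, f i, ∑ j ∈ t, g j⁆ₘ = ∑ i ∈ s, ∑ j ∈ t, ⁅f i, g j⁆ₘ := by
  simp only [Finset.sum_mul_sum, Finset.sum_sub_distrib]
  rw [Finset.sum_comm (s := t)]

namespace Module.End

variable {K V : Type*} [Field K] [AddCommGroup V] [Module K V]
  {D L N : Module.End K V} {c ℓ : K} {f : V}

theorem apply_apply_eq_of_commutator_eq {A B C : Module.End K V} (h : ⁅A, B⁆ₘ = C)
    (x : V) : A (B x) = B (A x) + C x := by
  rw [← h, LinearMap.sub_apply, Module.End.mul_apply, Module.End.mul_apply, add_sub_cancel]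

theorem apply_pow_apply_eq_smul (hN : ⁅N, L⁆ₘ = (2 : K) • L) (hf : N f = ℓ • f) (k : ℕ) :
    N ((L ^ k) f) = (ℓ + 2 * k) • (L ^ k) f := by
  induction k with
  | zero => simpa using hf
  | succ k ih =>
    rw [pow_succ', Module.End.mul_apply, apply_apply_eq_of_commutator_eq hN, ih,
      LinearMap.smul_apply, map_smul, ← add_smul]
    push_cast
    ring_nf

theorem apply_pow_succ_apply_eq_smul (hD : ⁅D, L⁆ₘ = N - c • 1) (hN : ⁅N, L⁆ₘ = (2 : K) • L)
    (hDf : D f = 0) (hNf : N f = ℓ • f) (k : ℕ) :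
    D ((L ^ (k + 1)) f) = ((k + 1) * (ℓ + k - c)) • (L ^ k) f := by
  induction k with
  | zero =>
    rw [zero_add, pow_one, pow_zero, apply_apply_eq_of_commutator_eq hD, hDf, map_zero,
      LinearMap.sub_apply, hNf, LinearMap.smul_apply, Module.End.one_apply, ← sub_smul]
    simp
  | succ k ih =>
    rw [pow_succ' L (k + 1), Module.End.mul_apply, apply_apply_eq_of_commutator_eq hD,
      ih, map_smul, LinearMap.sub_apply, apply_pow_apply_eq_smul hN hNf, LinearMap.smul_apply,
      Module.End.one_apply, ← Module.End.mul_apply, ← pow_succ']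
    push_cast
    module

theorem eq_zero_of_pow_apply_eq_zero [CharZero K] (hD : ⁅D, L⁆ₘ = N - c • 1)
    (hN : ⁅N, L⁆ₘ = (2 : K) • L) (hDf : D f = 0) (hNf : N f = ℓ • f) (hℓ : ∀ k : ℕ, ℓ + k ≠ c)
    {k : ℕ} (hk : (L ^ k) f = 0) : f = 0 := by
  induction k with
  | zero => simpa using hk
  | succ k ih =>
    have hlower : (((k : K) + 1) * (ℓ + k - c)) • (L ^ k) f = 0 := by
      rw [← apply_pow_succ_apply_eq_smul hD hN hDf hNf, hk, map_zero]
    refine ih ((smul_eq_zero.mp hlower).resolve_left ?_)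
    exact mul_ne_zero (Nat.cast_add_one_ne_zero k) (sub_ne_zero.mpr (hℓ k))

theorem eq_zero_of_isNilpotent_of_commutator_eq [CharZero K] (hD : ⁅D, L⁆ₘ = N - c • 1)
    (hN : ⁅N, L⁆ₘ = (2 : K) • L) (hL : IsNilpotent L) (hDf : D f = 0) (hNf : N f = ℓ • f)
    (hℓ : ∀ k : ℕ, ℓ + k ≠ c) : f = 0 :=
  let ⟨_, hk⟩ := hL
  eq_zero_of_pow_apply_eq_zero hD hN hDf hNf hℓ (by rw [hk, LinearMap.zero_apply])

end Module.End

namespace ExteriorAlgebra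

open CliffordAlgebra LinearMap

variable {R M : Type*} [CommRing R] [AddCommGroup M] [Module R M]

theorem contractLeft_mul_mulLeft_ι_add (d : Module.Dual R M) (v : M) :
    contractLeft (Q := 0) d * mulLeft R (ι R v) + mulLeft R (ι R v) * contractLeft (Q := 0) d
      = d v • 1 := by
  ext x
  simp [contractLeft_ι_mul]

theorem mulLeft_ι_mul_mulLeft_ι_add (v w : M) :
    mulLeft R (ι R v) * mulLeft R (ι R w) + mulLeft R (ι R w) * mulLeft R (ι R v) = 0 := by
  ext x
  simp [← mul_assoc, ← add_mul, ι_add_mul_swap]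

theorem commute_ι_mul_ι_ι (u v w : M) : Commute (ι R u * ι R v) (ι R w) := by
  have swap (x y : M) : ι R x * ι R y = -(ι R y * ι R x) :=
    eq_neg_of_add_eq_zero_left (ι_add_mul_swap x y)
  show ι R u * ι R v * ι R w = ι R w * (ι R u * ι R v)
  rw [mul_assoc, swap v w, mul_neg, ← mul_assoc, swap u w, neg_mul, neg_neg, mul_assoc]

theorem isNilpotent_ι_mul_ι (v w : M) : IsNilpotent (ι R v * ι R w) :=
  ⟨2, by rw [sq, ← mul_assoc, (commute_ι_mul_ι_ι v w v).eq, ← mul_assoc, ι_sq_zero, zero_mul,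
    zero_mul]⟩

end ExteriorAlgebra

open ExteriorAlgebra LinearMap

theorem dθ_mul_mulLeft_θv_add (r s : Fin m) :
    dθ m r * mulLeft ℂ (θv m s) + mulLeft ℂ (θv m s) * dθ m r = if r = s then 1 else 0 := by
  simp [dθ, θv, contractLeft_mul_mulLeft_ι_add, Pi.single_apply]

theorem dθ_mul_mulLeft_ϑv_add (r s : Fin m) :
    dθ m r * mulLeft ℂ (ϑv m s) + mulLeft ℂ (ϑv m s) * dθ m r = 0 := by
  simp [dθ, ϑv, contractLeft_mul_mulLeft_ι_add]

theorem dϑ_mul_mulLeft_θv_add (r s : Fin m) :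
    dϑ m r * mulLeft ℂ (θv m s) + mulLeft ℂ (θv m s) * dϑ m r = 0 := by
  simp [dϑ, θv, contractLeft_mul_mulLeft_ι_add]

theorem dϑ_mul_mulLeft_ϑv_add (r s : Fin m) :
    dϑ m r * mulLeft ℂ (ϑv m s) + mulLeft ℂ (ϑv m s) * dϑ m r = if r = s then 1 else 0 := by
  simp [dϑ, ϑv, contractLeft_mul_mulLeft_ι_add, Pi.single_apply]

theorem commutator_dθ_mul_dϑ (r s : Fin m) :
    ⁅dθ m r * dϑ m r, mulLeft ℂ (θv m s) * mulLeft ℂ (ϑv m s)⁆ₘ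
      = if r = s then mulLeft ℂ (θv m r) * dθ m r + mulLeft ℂ (ϑv m r) * dϑ m r - 1 else 0 := by
  rw [commutator_mul_mul, dθ_mul_mulLeft_θv_add, dθ_mul_mulLeft_ϑv_add,
    dϑ_mul_mulLeft_θv_add, dϑ_mul_mulLeft_ϑv_add]
  split_ifs with h
  · subst h
    have hϑ := dϑ_mul_mulLeft_ϑv_add m r r
    rw [if_pos rfl] at hϑ
    simp only [mul_zero, zero_mul, one_mul, mul_one, sub_zero]
    rw [← hϑ]
    abel
  · simp

theorem commutator_mulLeft_θv_mul_dθ (p s : Fin m) :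
    ⁅mulLeft ℂ (θv m p) * dθ m p, mulLeft ℂ (θv m s) * mulLeft ℂ (ϑv m s)⁆ₘ
      = if p = s then mulLeft ℂ (θv m p) * mulLeft ℂ (ϑv m p) else 0 := by
  rw [commutator_mul_mul, dθ_mul_mulLeft_θv_add, dθ_mul_mulLeft_ϑv_add]
  simp only [θv, ϑv, mulLeft_ι_mul_mulLeft_ι_add]
  split_ifs with h <;> simp [h]

theorem commutator_mulLeft_ϑv_mul_dϑ (p s : Fin m) :
    ⁅mulLeft ℂ (ϑv m p) * dϑ m p, mulLeft ℂ (θv m s) * mulLeft ℂ (ϑv m s)⁆ₘ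
      = if p = s then mulLeft ℂ (θv m p) * mulLeft ℂ (ϑv m p) else 0 := by
  rw [commutator_mul_mul, dϑ_mul_mulLeft_θv_add, dϑ_mul_mulLeft_ϑv_add]
  simp only [θv, ϑv, mulLeft_ι_mul_mulLeft_ι_add]
  split_ifs with h <;> simp [h]

theorem ηc_eq_sum : ηc m = ∑ s, mulLeft ℂ (θv m s) * mulLeft ℂ (ϑv m s) := by
  change Algebra.lmul ℂ _ _ = _
  simp only [map_sum, map_mul]
  rfl

theorem commutator_Δc_ηc : ⁅Δc m, ηc m⁆ₘ = degθ m + degϑ m - (m : ℂ) • 1 := by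
  simp only [Δc, degθ, degϑ, ηc_eq_sum, ← Module.End.mul_eq_comp, Finset.sum_commutator_sum,
    commutator_dθ_mul_dϑ, Finset.sum_ite_eq, Finset.mem_univ, if_true, Finset.sum_sub_distrib,
    Finset.sum_add_distrib]
  simp [Nat.cast_smul_eq_nsmul]

theorem commutator_degθ_add_degϑ_ηc : ⁅degθ m + degϑ m, ηc m⁆ₘ = (2 : ℂ) • ηc m := by
  simp only [degθ, degϑ, ηc_eq_sum, ← Module.End.mul_eq_comp, add_mul, mul_add,
    add_sub_add_comm, Finset.sum_commutator_sum, commutator_mulLeft_θv_mul_dθ,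
    commutator_mulLeft_ϑv_mul_dϑ, Finset.sum_ite_eq, Finset.mem_univ, if_true]
  rw [two_smul]

theorem isNilpotent_ηc : IsNilpotent (ηc m) :=
  (Commute.isNilpotent_sum (fun _ _ ↦ isNilpotent_ι_mul_ι _ _) fun _ _ _ _ ↦
    (commute_ι_mul_ι_ι _ _ _).mul_right (commute_ι_mul_ι_ι _ _ _)).map (Algebra.lmul ℂ (ExtA m))

/-- No nonzero Δ̌-harmonic elements in bidegree (ℓ₁,ℓ₂) when ℓ₁+ℓ₂ ≥ m+1. -/
theorem no_harmonic_high_degree (f : ExtA m) (ℓ₁ ℓ₂ : ℕ)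
    (hf : Δc m f = 0) (h₁ : degθ m f = (ℓ₁ : ℂ) • f) (h₂ : degϑ m f = (ℓ₂ : ℂ) • f)
    (hdeg : m + 1 ≤ ℓ₁ + ℓ₂) : f = 0 := by
  refine Module.End.eq_zero_of_isNilpotent_of_commutator_eq (commutator_Δc_ηc m)
    (commutator_degθ_add_degϑ_ηc m) (isNilpotent_ηc m) hf (ℓ := ((ℓ₁ + ℓ₂ : ℕ) : ℂ)) ?_
    fun k ↦ ?_
  · rw [LinearMap.add_apply, h₁, h₂, ← add_smul, Nat.cast_add]
  · exact_mod_cast (by omega : ℓ₁ + ℓ₂ + k ≠ m)
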